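/- For all p, q ∈ ℝᵈ and β > 0, |f_β(p + q/2, p − q/2) − f_β(p, p)| ≤ C·min{1, |q|²} for a constant C depending only on β and μ, where f_β(p,q) = Ξ_β(|p|² − μ, |q|² − μ) and Ξ_β(E,E') = (tanh(βE/2) + tanh(βE'/2))/(E + E') (with the continuous extension at E' = −E). -/

import Mathlib

/-!
Put `a = βE/2`, `b = βE'/2` and `Ē = (E + E')/2`. The addition formulas give
`Ξ_β(E, E') (cosh (a + b) + cosh (a - b)) = Ξ_β(Ē, Ē) (cosh (a + b) + 1)`, so `Ξ_β(E, E')`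
differs from its value at the mean energy by at most `|Ξ_β(Ē, Ē)| min(1, (a - b)²/2)`.
For `E, E' = |p ± q/2|² - μ` we have `a - b = β⟨p, q⟩` and `Ē = |p|² + |q|²/4 - μ`, and the
factor `|p|²` hidden in `(a - b)²` is absorbed by `|Ē Ξ_β(Ē, Ē)| = |tanh (βĒ/2)| ≤ 1`.
On the diagonal `Ξ_β(E, E) = (β/2) tanhc (βE/2)` with `tanhc x = tanh x / x`, which takes values
in `[0, 1]` and is 1-Lipschitz; this controls the shift of the mean energy by `|q|²/4`.
-/

/-- The two-variable symbol `Ξ_β(E, E') = (tanh(βE/2) + tanh(βE'/2))/(E + E')`,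
with the continuous extension `(β/2)/cosh²(βE/2)` at `E' = −E`. -/
noncomputable def XiSym (β E E' : ℝ) : ℝ :=
  if E' = -E then (β / 2) / Real.cosh (β * E / 2) ^ 2
  else (Real.tanh (β * E / 2) + Real.tanh (β * E' / 2)) / (E + E')

open Real Set

namespace Real

lemma sinh_le_mul_cosh {x : ℝ} (hx : 0 ≤ x) : sinh x ≤ x * cosh x := by
  have hmono : MonotoneOn (fun y ↦ y * cosh y - sinh y) (Ici 0) := by
    refine monotoneOn_of_hasDerivWithinAt_nonneg (convex_Ici 0) (by fun_prop)
      (fun y _ ↦ (((hasDerivAt_id y).mul (hasDerivAt_cosh y)).sub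
        (hasDerivAt_sinh y)).hasDerivWithinAt) fun y hy ↦ ?_
    rw [interior_Ici, mem_Ioi] at hy
    have : 0 ≤ sinh y := sinh_nonneg_iff.2 hy.le
    simp only [id]
    nlinarith
  simpa using hmono self_mem_Ici hx hx

lemma abs_sinh_le_abs_mul_cosh (x : ℝ) : |sinh x| ≤ |x| * cosh x := by
  rw [abs_sinh, ← cosh_abs]
  exact sinh_le_mul_cosh (abs_nonneg x)

lemma cosh_two_mul_add_one (x : ℝ) : cosh (2 * x) + 1 = 2 * cosh x ^ 2 := by
  rw [cosh_two_mul, cosh_sq]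
  ring

lemma cosh_sub_one_le (x : ℝ) : cosh x - 1 ≤ x ^ 2 / 2 * cosh x := by
  have hsq : sinh (x / 2) ^ 2 ≤ (x / 2) ^ 2 * cosh (x / 2) ^ 2 := by
    rw [← sq_abs, ← sq_abs (x / 2), ← mul_pow]
    exact pow_le_pow_left₀ (abs_nonneg _) (abs_sinh_le_abs_mul_cosh _) 2
  have hdouble := cosh_two_mul (x / 2)
  rw [mul_div_cancel₀ x two_ne_zero] at hdouble
  nlinarith [cosh_sq (x / 2), one_le_cosh x, sq_nonneg x]

lemma tanh_nonneg {x : ℝ} (hx : 0 ≤ x) : 0 ≤ tanh x := by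
  rw [tanh_eq_sinh_div_cosh]
  exact div_nonneg (sinh_nonneg_iff.2 hx) (cosh_pos x).le

lemma tanh_le_self {x : ℝ} (hx : 0 ≤ x) : tanh x ≤ x := by
  rw [tanh_eq_sinh_div_cosh, div_le_iff₀ (cosh_pos x)]
  exact sinh_le_mul_cosh hx

lemma abs_tanh_le_one (x : ℝ) : |tanh x| ≤ 1 :=
  abs_le.2 ⟨(neg_one_lt_tanh x).le, (tanh_lt_one x).le⟩

lemma hasDerivAt_tanh (x : ℝ) : HasDerivAt tanh (1 / cosh x ^ 2) x := by
  have h := (hasDerivAt_sinh x).div (hasDerivAt_cosh x) (cosh_pos x).ne'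
  rw [show sinh / cosh = tanh from funext fun y ↦ (tanh_eq_sinh_div_cosh y).symm] at h
  refine h.congr_deriv ?_
  rw [← cosh_sq_sub_sinh_sq x]
  ring

lemma tanh_add_tanh_mul_cosh_add_cosh (a b : ℝ) :
    (tanh a + tanh b) * (cosh (a + b) + cosh (a - b)) = 2 * sinh (a + b) := by
  have := cosh_pos a
  have := cosh_pos b
  rw [tanh_eq_sinh_div_cosh, tanh_eq_sinh_div_cosh, cosh_add, cosh_sub, sinh_add]
  field_simp
  ring

noncomputable def tanhc : ℝ → ℝ := dslope tanh 0

lemma tanhc_zero : tanhc 0 = 1 := by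
  simp [tanhc, dslope_same, (hasDerivAt_tanh 0).deriv]

lemma tanhc_of_ne_zero {x : ℝ} (hx : x ≠ 0) : tanhc x = tanh x / x := by
  simp [tanhc, dslope_of_ne _ hx, slope_def_field]

lemma mul_tanhc (x : ℝ) : x * tanhc x = tanh x := by
  simpa [tanhc] using sub_smul_dslope_of_zero tanh_zero x

lemma tanhc_abs (x : ℝ) : tanhc |x| = tanhc x := by
  rcases eq_or_ne x 0 with rfl | hx
  · simp
  rcases abs_choice x with h | h <;> rw [h]
  rw [tanhc_of_ne_zero hx, tanhc_of_ne_zero (neg_ne_zero.2 hx), tanh_neg, neg_div_neg_eq]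

lemma continuous_tanhc : Continuous tanhc := by
  refine continuous_iff_continuousAt.2 fun x ↦ ?_
  rcases eq_or_ne x 0 with rfl | hx
  · exact continuousAt_dslope_same.2 (hasDerivAt_tanh 0).differentiableAt
  · exact (continuousAt_dslope_of_ne hx).2 (hasDerivAt_tanh x).continuousAt

lemma hasDerivAt_tanhc {x : ℝ} (hx : x ≠ 0) :
    HasDerivAt tanhc ((x / cosh x ^ 2 - tanh x) / x ^ 2) x := by
  have h := (hasDerivAt_tanh x).div (hasDerivAt_id x) hx
  simp only [id] at h
  refine (h.congr_deriv (by field_simp)).congr_of_eventuallyEq ?_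
  filter_upwards [eventually_ne_nhds hx] with y hy
  exact tanhc_of_ne_zero hy

lemma tanhc_nonneg (x : ℝ) : 0 ≤ tanhc x := by
  rw [← tanhc_abs]
  rcases (abs_nonneg x).eq_or_lt with h | h
  · rw [← h, tanhc_zero]
    exact zero_le_one
  · rw [tanhc_of_ne_zero h.ne']
    exact div_nonneg (tanh_nonneg h.le) h.le

lemma tanhc_le_one (x : ℝ) : tanhc x ≤ 1 := by
  rw [← tanhc_abs]
  rcases (abs_nonneg x).eq_or_lt with h | h
  · rw [← h, tanhc_zero]
  · rw [tanhc_of_ne_zero h.ne', div_le_one h]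
    exact tanh_le_self h.le

lemma abs_deriv_tanhc_le_one {x : ℝ} (hx : 0 < x) :
    |(x / cosh x ^ 2 - tanh x) / x ^ 2| ≤ 1 := by
  have hc := cosh_pos x
  have hs := sinh_nonneg_iff.2 hx.le
  have hupper := sinh_le_mul_cosh hx.le
  have hlower := self_le_sinh_iff.2 hx.le
  rw [abs_le, tanh_eq_sinh_div_cosh, le_div_iff₀ (by positivity), div_le_iff₀ (by positivity)]
  constructor
  · rw [div_sub_div _ _ (by positivity) hc.ne', le_div_iff₀ (by positivity)]
    nlinarith [mul_le_mul hupper (sinh_lt_cosh x).le hs (by positivity), cosh_sq x]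
  · rw [div_sub_div _ _ (by positivity) hc.ne', div_le_iff₀ (by positivity)]
    have : 0 ≤ x ^ 2 * (cosh x ^ 2 * cosh x) := by positivity
    nlinarith [mul_le_mul_of_nonneg_right hlower hc.le,
      mul_le_mul_of_nonneg_left (one_le_cosh x) (mul_nonneg hs hc.le)]

lemma abs_tanhc_sub_le (a b : ℝ) : |tanhc a - tanhc b| ≤ |a - b| := by
  suffices h : ∀ x y : ℝ, 0 ≤ x → x < y → |tanhc y - tanhc x| ≤ y - x by
    rw [← tanhc_abs a, ← tanhc_abs b]
    refine le_trans ?_ (abs_abs_sub_abs_le_abs_sub a b)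
    rcases lt_trichotomy |a| |b| with hab | hab | hab
    · rw [abs_sub_comm, abs_of_neg (sub_neg.2 hab), neg_sub]
      exact h _ _ (abs_nonneg a) hab
    · simp [hab]
    · rw [abs_of_pos (sub_pos.2 hab)]
      exact h _ _ (abs_nonneg b) hab
  intro x y hx hxy
  obtain ⟨c, hc, hslope⟩ := exists_hasDerivAt_eq_slope tanhc _ hxy continuous_tanhc.continuousOn
    fun z hz ↦ hasDerivAt_tanhc (hx.trans_lt hz.1).ne'
  have hyx : 0 < y - x := sub_pos.2 hxy
  rw [eq_div_iff hyx.ne'] at hslope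
  rw [← hslope, abs_mul, abs_of_pos hyx]
  exact mul_le_of_le_one_left hyx.le (abs_deriv_tanhc_le_one (hx.trans_lt hc.1))

end Real

lemma le_max_mul_min_one {α : Type*} [Semiring α] [LinearOrder α] [IsOrderedRing α]
    {x a b s : α} (hs : 0 ≤ s) (ha : x ≤ a) (hb : x ≤ b * s) : x ≤ max a b * min 1 s := by
  rcases le_total s 1 with h | h
  · rw [min_eq_right h]
    exact hb.trans (mul_le_mul_of_nonneg_right (le_max_right a b) hs)
  · rw [min_eq_left h, mul_one]
    exact ha.trans (le_max_left a b)

lemma XiSym_self_mul (β E : ℝ) : XiSym β E E * E = tanh (β * E / 2) := by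
  rcases eq_or_ne E 0 with rfl | hE
  · simp
  rw [XiSym, if_neg fun h ↦ hE (by linarith)]
  field_simp

lemma XiSym_self (β E : ℝ) : XiSym β E E = β / 2 * tanhc (β * E / 2) := by
  rcases eq_or_ne E 0 with rfl | hE
  · simp [XiSym, tanhc_zero]
  apply mul_right_cancel₀ hE
  rw [XiSym_self_mul, ← mul_tanhc]
  ring

lemma abs_XiSym_self_le (β E : ℝ) : |XiSym β E E| ≤ |β| / 2 := by
  rw [XiSym_self, abs_mul, abs_of_nonneg (tanhc_nonneg _), abs_div, abs_two]
  exact mul_le_of_le_one_right (by positivity) (tanhc_le_one _)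

lemma abs_XiSym_self_mul_le_of_le_add {β μ E x : ℝ} (hx : x ≤ E + μ) :
    |XiSym β E E| * x ≤ 1 + |β| * |μ| / 2 := by
  have hE : |XiSym β E E| * |E| ≤ 1 := by
    rw [← abs_mul, XiSym_self_mul]
    exact abs_tanh_le_one _
  have hx' : x ≤ |E| + |μ| := by linarith [le_abs_self E, le_abs_self μ]
  nlinarith [mul_le_mul_of_nonneg_left hx' (abs_nonneg (XiSym β E E)),
    mul_le_mul_of_nonneg_right (abs_XiSym_self_le β E) (abs_nonneg μ)]

lemma abs_XiSym_self_sub_le (β x y : ℝ) :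
    |XiSym β x x - XiSym β y y| ≤ β ^ 2 / 4 * |x - y| := by
  rw [XiSym_self, XiSym_self, ← mul_sub, abs_mul]
  calc |β / 2| * |tanhc (β * x / 2) - tanhc (β * y / 2)|
      ≤ |β / 2| * |β * x / 2 - β * y / 2| :=
        mul_le_mul_of_nonneg_left (abs_tanhc_sub_le _ _) (abs_nonneg _)
    _ = β ^ 2 / 4 * |x - y| := by
        rw [← abs_mul, show β / 2 * (β * x / 2 - β * y / 2) = β ^ 2 / 4 * (x - y) by ring,
          abs_mul, abs_of_nonneg (by positivity : (0 : ℝ) ≤ β ^ 2 / 4)]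

lemma abs_XiSym_self_add_sub_le (β E s : ℝ) (hs : 0 ≤ s) :
    |XiSym β (E + s / 4) (E + s / 4) - XiSym β E E| ≤ max |β| (β ^ 2 / 16) * min 1 s := by
  refine le_max_mul_min_one hs ?_ ?_
  · calc _ ≤ |XiSym β (E + s / 4) (E + s / 4)| + |XiSym β E E| := abs_sub _ _
      _ ≤ |β| / 2 + |β| / 2 := add_le_add (abs_XiSym_self_le _ _) (abs_XiSym_self_le _ _)
      _ = |β| := by ring
  · calc _ ≤ β ^ 2 / 4 * |E + s / 4 - E| := abs_XiSym_self_sub_le _ _ _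
      _ = β ^ 2 / 16 * s := by rw [add_sub_cancel_left, abs_of_nonneg (by positivity)]; ring

lemma XiSym_mul_cosh_add_cosh (β E E' : ℝ) :
    XiSym β E E' * (cosh (β * (E + E') / 2) + cosh (β * (E - E') / 2)) =
      XiSym β ((E + E') / 2) ((E + E') / 2) * (cosh (β * (E + E') / 2) + 1) := by
  by_cases h : E' = -E
  · subst h
    have hcosh := cosh_two_mul_add_one (β * E / 2)
    rw [show 2 * (β * E / 2) = β * (E + E) / 2 by ring] at hcosh
    have hzero : XiSym β 0 0 = β / 2 := by simp [XiSym]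
    rw [XiSym, if_pos rfl, add_neg_cancel, zero_div, hzero, mul_zero, zero_div, cosh_zero,
      sub_neg_eq_add, add_comm 1, hcosh]
    field_simp
    ring
  · have hsum : E + E' ≠ 0 := fun h' ↦ h (by linarith)
    apply mul_right_cancel₀ hsum
    have hmean := XiSym_self_mul β ((E + E') / 2)
    rw [XiSym, if_neg h, div_mul_eq_mul_div, div_mul_cancel₀ _ hsum,
      show β * (E + E') / 2 = β * E / 2 + β * E' / 2 by ring,
      show β * (E - E') / 2 = β * E / 2 - β * E' / 2 by ring, tanh_add_tanh_mul_cosh_add_cosh,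
      show XiSym β ((E + E') / 2) ((E + E') / 2) * (cosh (β * E / 2 + β * E' / 2) + 1) * (E + E')
        = 2 * (XiSym β ((E + E') / 2) ((E + E') / 2) * ((E + E') / 2)) *
          (cosh (β * E / 2 + β * E' / 2) + 1) by ring, hmean,
      show β * E / 2 + β * E' / 2 = 2 * (β * ((E + E') / 2) / 2) by ring,
      cosh_two_mul_add_one, sinh_two_mul, tanh_eq_sinh_div_cosh]
    have := cosh_pos (β * ((E + E') / 2) / 2)
    field_simp

lemma abs_XiSym_sub_XiSym_mean_le (β E E' : ℝ) :
    |XiSym β E E' - XiSym β ((E + E') / 2) ((E + E') / 2)| ≤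
      |XiSym β ((E + E') / 2) ((E + E') / 2)| * min 1 ((β * (E - E')) ^ 2 / 8) := by
  set Ξm := XiSym β ((E + E') / 2) ((E + E') / 2)
  set u := cosh (β * (E + E') / 2)
  set v := β * (E - E') / 2
  have hu : 0 < u := cosh_pos _
  have hv : 1 ≤ cosh v := one_le_cosh v
  have hdiff : XiSym β E E' - Ξm = Ξm * -((cosh v - 1) / (u + cosh v)) := by
    have hid := XiSym_mul_cosh_add_cosh β E E'
    field_simp
    linear_combination hid
  have hratio : (cosh v - 1) / (u + cosh v) ≤ min 1 ((β * (E - E')) ^ 2 / 8) := by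
    refine le_min ((div_le_one (by positivity)).2 (by linarith)) ?_
    rw [div_le_iff₀ (by positivity)]
    calc cosh v - 1 ≤ v ^ 2 / 2 * cosh v := cosh_sub_one_le v
      _ ≤ v ^ 2 / 2 * (u + cosh v) := by gcongr; linarith
      _ = (β * (E - E')) ^ 2 / 8 * (u + cosh v) := by ring
  rw [hdiff, abs_mul, abs_neg,
    abs_of_nonneg (a := (cosh v - 1) / (u + cosh v)) (div_nonneg (by linarith) (by positivity))]
  exact mul_le_mul_of_nonneg_left hratio (abs_nonneg _)

open scoped RealInnerProductSpace

section InnerProductSpace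

variable {V : Type*} [NormedAddCommGroup V] [InnerProductSpace ℝ V]

lemma norm_add_half_smul_sq (p q : V) :
    ‖p + (1 / 2 : ℝ) • q‖ ^ 2 = ‖p‖ ^ 2 + ⟪p, q⟫ + ‖q‖ ^ 2 / 4 := by
  rw [norm_add_sq_real, real_inner_smul_right, norm_smul, Real.norm_of_nonneg (by norm_num)]
  ring

lemma norm_sub_half_smul_sq (p q : V) :
    ‖p - (1 / 2 : ℝ) • q‖ ^ 2 = ‖p‖ ^ 2 - ⟪p, q⟫ + ‖q‖ ^ 2 / 4 := by
  rw [norm_sub_sq_real, real_inner_smul_right, norm_smul, Real.norm_of_nonneg (by norm_num)]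
  ring

lemma abs_XiSym_offDiag_sub_mean_le (β μ : ℝ) (p q : V) :
    |XiSym β (‖p + (1 / 2 : ℝ) • q‖ ^ 2 - μ) (‖p - (1 / 2 : ℝ) • q‖ ^ 2 - μ)
        - XiSym β (‖p‖ ^ 2 - μ + ‖q‖ ^ 2 / 4) (‖p‖ ^ 2 - μ + ‖q‖ ^ 2 / 4)|
      ≤ max (|β| / 2) (β ^ 2 * (2 + |β| * |μ|) / 4) * min 1 (‖q‖ ^ 2) := by
  set Em := ‖p‖ ^ 2 - μ + ‖q‖ ^ 2 / 4 with hEm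
  set Ξm := XiSym β Em Em
  have hmean : ((‖p + (1 / 2 : ℝ) • q‖ ^ 2 - μ) + (‖p - (1 / 2 : ℝ) • q‖ ^ 2 - μ)) / 2 = Em := by
    rw [norm_add_half_smul_sq, norm_sub_half_smul_sq]
    ring
  have hgap : β * ((‖p + (1 / 2 : ℝ) • q‖ ^ 2 - μ) - (‖p - (1 / 2 : ℝ) • q‖ ^ 2 - μ)) =
      2 * β * ⟪p, q⟫ := by
    rw [norm_add_half_smul_sq, norm_sub_half_smul_sq]
    ring
  have h := abs_XiSym_sub_XiSym_mean_le β (‖p + (1 / 2 : ℝ) • q‖ ^ 2 - μ)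
    (‖p - (1 / 2 : ℝ) • q‖ ^ 2 - μ)
  rw [hmean, hgap] at h
  refine le_max_mul_min_one (sq_nonneg _) (h.trans ?_) (h.trans ?_)
  · exact (mul_le_of_le_one_right (abs_nonneg _) (min_le_left _ _)).trans (abs_XiSym_self_le β Em)
  have hinner : ⟪p, q⟫ ^ 2 ≤ ‖p‖ ^ 2 * ‖q‖ ^ 2 := by
    rw [← mul_pow, ← sq_abs]
    exact pow_le_pow_left₀ (abs_nonneg _) (abs_real_inner_le_norm p q) 2
  have hp : |Ξm| * ‖p‖ ^ 2 ≤ 1 + |β| * |μ| / 2 :=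
    abs_XiSym_self_mul_le_of_le_add (by linarith [sq_nonneg ‖q‖])
  calc |Ξm| * min 1 ((2 * β * ⟪p, q⟫) ^ 2 / 8)
      ≤ |Ξm| * ((2 * β * ⟪p, q⟫) ^ 2 / 8) :=
        mul_le_mul_of_nonneg_left (min_le_right _ _) (abs_nonneg _)
    _ = β ^ 2 / 2 * (|Ξm| * ⟪p, q⟫ ^ 2) := by ring
    _ ≤ β ^ 2 / 2 * ((|Ξm| * ‖p‖ ^ 2) * ‖q‖ ^ 2) := by rw [mul_assoc]; gcongr
    _ ≤ β ^ 2 / 2 * ((1 + |β| * |μ| / 2) * ‖q‖ ^ 2) := by gcongr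
    _ = β ^ 2 * (2 + |β| * |μ|) / 4 * ‖q‖ ^ 2 := by ring

end InnerProductSpace

/-- The symbol `f_β(p, q) = Ξ_β(|p|² − μ, |q|² − μ)` of the operator `K_T`
satisfies `|f_β(p + q/2, p − q/2) − f_β(p, p)| ≤ C min{1, |q|²}` for a constant
`C` depending only on `β` and `μ`. -/
theorem fbeta_symbol_quadratic_continuity (μ β : ℝ) (hβ : 0 < β) :
    ∃ C > 0, ∀ (d : ℕ) (p q : EuclideanSpace ℝ (Fin d)),
      |XiSym β (‖p + (1 / 2 : ℝ) • q‖ ^ 2 - μ) (‖p - (1 / 2 : ℝ) • q‖ ^ 2 - μ)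
          - XiSym β (‖p‖ ^ 2 - μ) (‖p‖ ^ 2 - μ)|
        ≤ C * min 1 (‖q‖ ^ 2) := by
  refine ⟨max (|β| / 2) (β ^ 2 * (2 + |β| * |μ|) / 4) + max |β| (β ^ 2 / 16),
    by positivity, fun d p q ↦ ?_⟩
  set Em := ‖p‖ ^ 2 - μ + ‖q‖ ^ 2 / 4
  calc _ ≤ _ := abs_sub_le _ (XiSym β Em Em) _
    _ ≤ _ := add_le_add (abs_XiSym_offDiag_sub_mean_le β μ p q)
        (abs_XiSym_self_add_sub_le β _ _ (sq_nonneg _))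
    _ = _ := (add_mul _ _ _).symm
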